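/- arXiv:1709.07716 — 3 statements merged into one kernel-verified Lean document; each statement's English description precedes it below -/
import Mathlib

section
/- Let K : ℝ² → ℝ be a continuous, symmetric, square-integrable probability density, H symmetric positive-definite, K_H(x) = |H|^{-1/2} K(H^{-1/2} x), and λ₀ : ℝ² → ℝ continuous and bounded. Then for fixed x, y ∈ ℝ², ∫ K_H(x−u) K_H(y−u) λ₀(u) du = |H|^{-1/2} λ₀(x) (K∘K)(H^{-1/2}(x−y)) + o(|H|^{-1/2}) as the entries of H tend to 0, where (K∘K) denotes the convolution K∗K. -/
/-!
Substituting `u = x - S w` with `S = H^{1/2}` turns the integral into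
`|S|⁻¹ ∫ K(w) K(v + w) λ₀(x - S w) dw` with `v = S⁻¹(y - x)`, while by the symmetry of `K` the
leading term is `|S|⁻¹ λ₀(x) ∫ K(w) K(v + w) dw`. The shift `v` need not stay bounded, so the
remainder `∫ K(v + w) · K(w) (λ₀(x - S w) - λ₀(x)) dw` is handled by Cauchy–Schwarz: translation
invariance bounds the first factor by `‖K‖₂`, and the second tends to `0` in `L²` by dominated
convergence, since `S → 0` and `λ₀` is bounded and continuous.
-/

open MeasureTheory Filter Topology Asymptotics
open scoped Matrix

theorem norm_integral_mul_le_sqrt_integral_sq {α : Type*} [MeasurableSpace α] {μ : Measure α}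
    {f g : α → ℝ} (hf : MemLp f 2 μ) (hg : MemLp g 2 μ) :
    ‖∫ a, f a * g a ∂μ‖ ≤ √(∫ a, f a ^ 2 ∂μ) * √(∫ a, g a ^ 2 ∂μ) := by
  have hnorm_sq (h : α → ℝ) : ∫ a, ‖h a‖ ^ (2 : ℝ) ∂μ = ∫ a, h a ^ 2 ∂μ := by
    simp only [Real.rpow_two, Real.norm_eq_abs, sq_abs]
  calc ‖∫ a, f a * g a ∂μ‖ ≤ ∫ a, ‖f a * g a‖ ∂μ := norm_integral_le_integral_norm _
    _ = ∫ a, ‖f a‖ * ‖g a‖ ∂μ := by simp only [norm_mul]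
    _ ≤ (∫ a, ‖f a‖ ^ (2 : ℝ) ∂μ) ^ (1 / 2 : ℝ) * (∫ a, ‖g a‖ ^ (2 : ℝ) ∂μ) ^ (1 / 2 : ℝ) :=
        integral_mul_norm_le_Lp_mul_Lq Real.HolderConjugate.two_two (by simpa using hf)
          (by simpa using hg)
    _ = √(∫ a, f a ^ 2 ∂μ) * √(∫ a, g a ^ 2 ∂μ) := by
        rw [hnorm_sq, hnorm_sq, ← Real.sqrt_eq_rpow, ← Real.sqrt_eq_rpow]

theorem tendsto_integral_mul_of_tendsto_integral_sq {α ι : Type*} [MeasurableSpace α]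
    {μ : Measure α} {l : Filter ι} {f g : ι → α → ℝ} {B : ℝ}
    (hf : ∀ i, MemLp (f i) 2 μ) (hg : ∀ i, MemLp (g i) 2 μ) (hfB : ∀ i, ∫ a, f i a ^ 2 ∂μ ≤ B)
    (hg0 : Tendsto (fun i => ∫ a, g i a ^ 2 ∂μ) l (𝓝 0)) :
    Tendsto (fun i => ∫ a, f i a * g i a ∂μ) l (𝓝 0) := by
  refine squeeze_zero_norm (fun i => (norm_integral_mul_le_sqrt_integral_sq (hf i) (hg i)).trans
    (mul_le_mul_of_nonneg_right (Real.sqrt_le_sqrt (hfB i)) (Real.sqrt_nonneg _))) ?_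
  simpa using (hg0.sqrt.const_mul √B)

theorem tendsto_integral_sq_mul_of_tendsto_zero {α ι : Type*} [MeasurableSpace α]
    {μ : Measure α} {l : Filter ι} [l.IsCountablyGenerated] {K : α → ℝ} {h : ι → α → ℝ} {C : ℝ}
    (hK : MemLp K 2 μ) (hmeas : ∀ i, AEStronglyMeasurable (h i) μ) (hbdd : ∀ i a, |h i a| ≤ C)
    (hlim : ∀ a, Tendsto (fun i => h i a) l (𝓝 0)) :
    Tendsto (fun i => ∫ a, (K a * h i a) ^ 2 ∂μ) l (𝓝 0) := by
  have hdom := tendsto_integral_filter_of_dominated_convergence (fun a => C ^ 2 * K a ^ 2)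
    (Eventually.of_forall fun i => ((hK.1.mul (hmeas i)).pow 2))
    (Eventually.of_forall fun i => Eventually.of_forall fun a => ?_)
    (hK.integrable_sq.const_mul _)
    (Eventually.of_forall fun a => by simpa using ((hlim a).const_mul (K a)).pow 2)
  · simpa using hdom
  · rw [Real.norm_eq_abs, abs_of_nonneg (sq_nonneg _), mul_pow, mul_comm]
    exact mul_le_mul_of_nonneg_right (sq_le_sq' (abs_le.1 (hbdd i a)).1 (abs_le.1 (hbdd i a)).2)
      (sq_nonneg _)

section Matrix

variable {ι : Type*} [Fintype ι]

theorem Matrix.IsHermitian.sq_apply_le_mul_self_apply {S : Matrix ι ι ℝ} (hS : S.IsHermitian)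
    (i j : ι) : S i j ^ 2 ≤ (S * S) i i := by
  rw [Matrix.mul_apply]
  calc S i j ^ 2 ≤ ∑ k, S i k ^ 2 :=
        Finset.single_le_sum (f := fun k => S i k ^ 2) (fun k _ => sq_nonneg _) (Finset.mem_univ j)
    _ = ∑ k, S i k * S k i := Finset.sum_congr rfl fun k _ => by rw [← hS.apply i k]; simp [sq]

theorem Matrix.tendsto_zero_of_mul_self_tendsto_zero {κ : Type*} {l : Filter κ}
    {S : κ → Matrix ι ι ℝ} (hS : ∀ n, (S n).IsHermitian)
    (hSS : Tendsto (fun n => S n * S n) l (𝓝 0)) : Tendsto S l (𝓝 0) := by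
  refine tendsto_pi_nhds.2 fun i => tendsto_pi_nhds.2 fun j => ?_
  have hdiag : Tendsto (fun n => √((S n * S n) i i)) l (𝓝 0) := by
    simpa using (tendsto_pi_nhds.1 (tendsto_pi_nhds.1 hSS i) i).sqrt
  refine squeeze_zero_norm (fun n => ?_) hdiag
  rw [Real.norm_eq_abs, ← Real.sqrt_sq_eq_abs]
  exact Real.sqrt_le_sqrt ((hS n).sq_apply_le_mul_self_apply i j)

theorem Matrix.integral_comp_mulVec [DecidableEq ι] (M : Matrix ι ι ℝ) (hM : M.det ≠ 0)
    (f : (ι → ℝ) → ℝ) :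
    ∫ w, f (M *ᵥ w) = |M.det|⁻¹ * ∫ u, f u := by
  let e : (ι → ℝ) ≃ᵐ (ι → ℝ) := (M.toLinearEquiv' (M.invertibleOfIsUnitDet hM.isUnit)
    ).toContinuousLinearEquiv.toHomeomorph.toMeasurableEquiv
  calc ∫ w, f (M *ᵥ w) = ∫ w, f (e w) := rfl
    _ = ∫ u, f u ∂(Measure.map (Matrix.toLin' M) volume) := (integral_map_equiv e f).symm
    _ = |M.det|⁻¹ * ∫ u, f u := by
      rw [Real.map_matrix_volume_pi_eq_smul_volume_pi hM, integral_smul_measure,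
        ENNReal.toReal_ofReal (abs_nonneg _), smul_eq_mul, abs_inv]

end Matrix

section Kernel

variable {ι : Type*} [Fintype ι] {K lam : (ι → ℝ) → ℝ}

theorem integral_kernel_product_eq [DecidableEq ι] (S : Matrix ι ι ℝ) (hS : S.det ≠ 0)
    (x y : ι → ℝ) :
    ∫ u, K (S⁻¹ *ᵥ (x - u)) * K (S⁻¹ *ᵥ (y - u)) * lam u
      = |S.det| * ∫ w, K w * K (S⁻¹ *ᵥ (y - x) + w) * lam (x - S *ᵥ w) := by
  set F := fun u => K (S⁻¹ *ᵥ (x - u)) * K (S⁻¹ *ᵥ (y - u)) * lam u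
  have hF (w : ι → ℝ) : F (x - S *ᵥ w) = K w * K (S⁻¹ *ᵥ (y - x) + w) * lam (x - S *ᵥ w) := by
    simp only [F, sub_sub_cancel, show y - (x - S *ᵥ w) = y - x + S *ᵥ w by abel,
      Matrix.mulVec_add, Matrix.mulVec_mulVec, Matrix.nonsing_inv_mul _ hS.isUnit,
      Matrix.one_mulVec]
  rw [← integral_sub_left_eq_self F volume x, ← funext hF,
    Matrix.integral_comp_mulVec S hS (fun u => F (x - u)),
    mul_inv_cancel_left₀ (abs_ne_zero.2 hS)]

theorem integral_scaled_kernel_product_sub [DecidableEq ι] (hK : MemLp K 2 volume)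
    (hKsymm : ∀ u, K (-u) = K u) (hlam : Continuous lam) {C : ℝ} (hC : ∀ u, |lam u| ≤ C)
    (S : Matrix ι ι ℝ) (hS : 0 < S.det) (x y : ι → ℝ) :
    (∫ u, S.det⁻¹ * K (S⁻¹ *ᵥ (x - u)) * (S.det⁻¹ * K (S⁻¹ *ᵥ (y - u))) * lam u)
        - S.det⁻¹ * lam x * ∫ w, K w * K (S⁻¹ *ᵥ (x - y) - w)
      = S.det⁻¹ * ∫ w, K w * K (S⁻¹ *ᵥ (y - x) + w) * (lam (x - S *ᵥ w) - lam x) := by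
  set v := S⁻¹ *ᵥ (y - x)
  have hconv : ∫ w, K w * K (S⁻¹ *ᵥ (x - y) - w) = ∫ w, K w * K (v + w) := by
    congr 1 with w
    rw [show S⁻¹ *ᵥ (x - y) - w = -(v + w) by rw [← neg_sub y x, Matrix.mulVec_neg]; abel,
      hKsymm]
  have hprod : Integrable (fun w => K w * K (v + w)) :=
    hK.integrable_mul (hK.comp_measurePreserving (measurePreserving_add_left volume v))
  have hprod_lam : Integrable (fun w => K w * K (v + w) * lam (x - S *ᵥ w)) :=
    hprod.mul_bdd (hlam.comp (continuous_const.sub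
      (continuous_const.matrix_mulVec continuous_id))).aestronglyMeasurable
      (Eventually.of_forall fun w => hC _)
  have hscale : ∫ u, S.det⁻¹ * K (S⁻¹ *ᵥ (x - u)) * (S.det⁻¹ * K (S⁻¹ *ᵥ (y - u))) * lam u
      = S.det⁻¹ * ∫ w, K w * K (v + w) * lam (x - S *ᵥ w) := by
    simp_rw [show ∀ a b c : ℝ, S.det⁻¹ * a * (S.det⁻¹ * b) * c = S.det⁻¹ * S.det⁻¹ * (a * b * c)
      from fun a b c => by ring]
    rw [integral_const_mul, integral_kernel_product_eq S hS.ne', abs_of_pos hS,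
      mul_assoc, inv_mul_cancel_left₀ hS.ne']
  rw [hscale, hconv, mul_assoc, ← mul_sub, ← integral_const_mul, ← integral_sub hprod_lam
    (hprod.const_mul _)]
  congr 2 with w
  ring

theorem tendsto_integral_mul_shift_mul_sub {κ : Type*} {l : Filter κ} [l.IsCountablyGenerated]
    (hK : MemLp K 2 volume) (hlam : Continuous lam) {C : ℝ} (hC : ∀ u, |lam u| ≤ C)
    {S : κ → Matrix ι ι ℝ} (hS : Tendsto S l (𝓝 0)) (v : κ → ι → ℝ) (x : ι → ℝ) :
    Tendsto (fun n => ∫ w, K w * K (v n + w) * (lam (x - S n *ᵥ w) - lam x)) l (𝓝 0) := by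
  have hlam_comp (n : κ) : Continuous fun w => lam (x - S n *ᵥ w) :=
    hlam.comp (continuous_const.sub (continuous_const.matrix_mulVec continuous_id))
  have hshift (n : κ) : MemLp (fun w => K (v n + w)) 2 volume :=
    hK.comp_measurePreserving (measurePreserving_add_left volume (v n))
  have hdiff_bdd (n : κ) (w : ι → ℝ) : |lam (x - S n *ᵥ w) - lam x| ≤ 2 * C :=
    (abs_sub _ _).trans (by linarith [hC (x - S n *ᵥ w), hC x])
  have hweighted (n : κ) : MemLp (fun w => K w * (lam (x - S n *ᵥ w) - lam x)) 2 volume :=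
    (memLp_top_of_bound ((hlam_comp n).sub continuous_const).aestronglyMeasurable (2 * C)
      (Eventually.of_forall (hdiff_bdd n))).mul' hK
  have hpointwise (w : ι → ℝ) : Tendsto (fun n => lam (x - S n *ᵥ w) - lam x) l (𝓝 0) := by
    have hSw : Tendsto (fun n => x - S n *ᵥ w) l (𝓝 x) := by
      simpa using tendsto_const_nhds.sub
        (((continuous_id.matrix_mulVec continuous_const).tendsto 0).comp hS)
    simpa using ((hlam.tendsto x).comp hSw).sub_const (lam x)
  simp_rw [show ∀ a b c : ℝ, a * b * c = b * (a * c) from fun a b c => by ring]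
  exact tendsto_integral_mul_of_tendsto_integral_sq hshift hweighted
    (fun n => (integral_add_left_eq_self (fun w => K w ^ 2) (v n)).le)
    (tendsto_integral_sq_mul_of_tendsto_zero hK
      (fun n => ((hlam_comp n).sub continuous_const).aestronglyMeasurable) hdiff_bdd hpointwise)

end Kernel

theorem kernel_product_expansion_general
    (K : (Fin 2 → ℝ) → ℝ)
    (hKsymm : ∀ u, K (-u) = K u)
    (hKL2 : MemLp K 2 volume)
    (H S : ℕ → Matrix (Fin 2) (Fin 2) ℝ)
    (hSpos : ∀ n, (S n).PosDef)
    (hSsq : ∀ n, S n * S n = H n)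
    (hHto0 : ∀ i j : Fin 2, Filter.Tendsto (fun n => H n i j) atTop (nhds 0))
    (KH : ℕ → (Fin 2 → ℝ) → ℝ)
    (hKH : ∀ n x, KH n x = ((H n).det) ^ (-(1:ℝ)/2) * K ((S n)⁻¹.mulVec x))
    (KconvK : (Fin 2 → ℝ) → ℝ)
    (hconv : ∀ v, KconvK v = ∫ w, K w * K (v - w))
    (lam0 : (Fin 2 → ℝ) → ℝ)
    (hlamcont : Continuous lam0)
    (hlambdd : ∃ C, ∀ u, |lam0 u| ≤ C)
    (x y : Fin 2 → ℝ) :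
    (fun n =>
        (∫ u, KH n (x - u) * KH n (y - u) * lam0 u) -
          ((H n).det) ^ (-(1:ℝ)/2) * lam0 x * KconvK ((S n)⁻¹.mulVec (x - y)))
      =o[atTop] (fun n => ((H n).det) ^ (-(1:ℝ)/2)) := by
  obtain ⟨C, hC⟩ := hlambdd
  have hdetS (n : ℕ) : 0 < (S n).det := (hSpos n).det_pos
  have hscale (n : ℕ) : (H n).det ^ (-(1:ℝ)/2) = (S n).det⁻¹ := by
    rw [← hSsq n, Matrix.det_mul, ← sq, ← Real.rpow_natCast, ← Real.rpow_mul (hdetS n).le]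
    norm_num [Real.rpow_neg_one]
  have hS0 : Tendsto S atTop (𝓝 0) := by
    refine Matrix.tendsto_zero_of_mul_self_tendsto_zero (fun n => (hSpos n).1) ?_
    simp only [hSsq]
    exact tendsto_pi_nhds.2 fun i => tendsto_pi_nhds.2 (hHto0 i)
  rw [isLittleO_iff_tendsto fun n h => absurd h (by simpa [hscale] using (hdetS n).ne')]
  refine (tendsto_integral_mul_shift_mul_sub hKL2 hlamcont hC hS0
    (fun n => (S n)⁻¹ *ᵥ (y - x)) x).congr fun n => ?_
  simp only [hKH, hscale n, hconv]
  rw [integral_scaled_kernel_product_sub hKL2 hKsymm hlamcont hC (S n) (hdetS n),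
    mul_div_cancel_left₀ _ (inv_ne_zero (hdetS n).ne')]

/-- for fixed `x, y`,
`∫ K_H(x−u) K_H(y−u) λ₀(u) du = |H|^{-1/2} λ₀(x) (K∘K)(H^{-1/2}(x−y)) + o(|H|^{-1/2})`
along symmetric positive-definite matrices `H n` with entries tending to `0`,
where `(K∘K)(v) = ∫ K(w) K(v−w) dw` and `S n` is the square root of `H n`. -/
theorem kernel_product_expansion
    (K : (Fin 2 → ℝ) → ℝ) (hKcont : Continuous K)
    (hKsymm : ∀ u, K (-u) = K u)
    (hKnonneg : ∀ u, 0 ≤ K u)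
    (hKdens : ∫ u, K u = 1)
    (hKL2 : MemLp K 2 volume)
    (H S : ℕ → Matrix (Fin 2) (Fin 2) ℝ)
    (hHpos : ∀ n, (H n).PosDef)
    (hSpos : ∀ n, (S n).PosDef)
    (hSsq : ∀ n, S n * S n = H n)
    (hHto0 : ∀ i j : Fin 2, Filter.Tendsto (fun n => H n i j) atTop (nhds 0))
    (KH : ℕ → (Fin 2 → ℝ) → ℝ)
    (hKH : ∀ n x, KH n x = ((H n).det) ^ (-(1:ℝ)/2) * K ((S n)⁻¹.mulVec x))
    (KconvK : (Fin 2 → ℝ) → ℝ)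
    (hconv : ∀ v, KconvK v = ∫ w, K w * K (v - w))
    (lam0 : (Fin 2 → ℝ) → ℝ)
    (hlamcont : Continuous lam0)
    (hlambdd : ∃ C, ∀ u, |lam0 u| ≤ C)
    (x y : Fin 2 → ℝ) :
    (fun n =>
        (∫ u, KH n (x - u) * KH n (y - u) * lam0 u) -
          ((H n).det) ^ (-(1:ℝ)/2) * lam0 x * KconvK ((S n)⁻¹.mulVec (x - y)))
      =o[atTop] (fun n => ((H n).det) ^ (-(1:ℝ)/2)) :=
  kernel_product_expansion_general K hKsymm hKL2 H S hSpos hSsq hHto0 KH hKH KconvK hconv lam0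
    hlamcont hlambdd x y
end

section
/- Let N be a Poisson random variable with mean m > 0 and define A(m) = E[(1/N)·1_{N≠0}]. Then A(m) → 0 as m → ∞, and moreover m·A(m) → 1 as m → ∞. -/
/-!
Shifting the index, `m · A(m) = e^{-m} ∑_{k ≥ 0} m^{k+2} / ((k+1) (k+1)!)`. The elementary bounds
`1/(k+2)! ≤ 1/((k+1) (k+1)!) ≤ 1/(k+2)! + 3/(k+3)!` compare this series termwise with tails of the
exponential series, which gives `1 - e^{-m} - m e^{-m} ≤ m · A(m) ≤ 1 + 3/m`. Both bounds tend to 1,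
and then `A(m) = (m · A(m)) / m → 0`.
-/

open Filter

/-- `A m = E[(1/N)·1_{N≠0}]` for `N ~ Poisson(m)`. -/
noncomputable def poissonA (m : ℝ) : ℝ :=
  ∑' k : ℕ, if k = 0 then 0 else (1 / (k : ℝ)) * (Real.exp (-m) * m ^ k / (Nat.factorial k))

open Finset Nat Real

theorem hasSum_pow_div_factorial_nat_add (x : ℝ) (j : ℕ) :
    HasSum (fun k ↦ x ^ (k + j) / (k + j)!) (exp x - ∑ i ∈ range j, x ^ i / i !) :=
  (hasSum_nat_add_iff' j).2 (exp_eq_exp_ℝ ▸ NormedSpace.expSeries_div_hasSum_exp x)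

theorem inv_factorial_add_two_le (k : ℕ) :
    ((k + 2)! : ℝ)⁻¹ ≤ (((k : ℝ) + 1) * (k + 1)!)⁻¹ := by
  gcongr
  push_cast [Nat.factorial_succ]
  nlinarith [(k + 1)!.cast_nonneg (α := ℝ)]

theorem inv_succ_mul_factorial_le (k : ℕ) :
    (((k : ℝ) + 1) * (k + 1)!)⁻¹ ≤ ((k + 2)! : ℝ)⁻¹ + 3 * ((k + 3)! : ℝ)⁻¹ := by
  push_cast [Nat.factorial_succ]
  field_simp
  nlinarith [k.cast_nonneg (α := ℝ)]

theorem poissonA_eq_tsum (m : ℝ) :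
    poissonA m = ∑' k : ℕ, exp (-m) * (m ^ (k + 1) / ((k + 1) * (k + 1)!)) := by
  rw [poissonA, ← Nat.succ_injective.tsum_eq]
  · congr 1 with k
    push_cast [Nat.factorial_succ]
    field_simp
  · intro k hk
    cases k with
    | zero => simp at hk
    | succ k => exact ⟨k, rfl⟩

theorem summable_pow_div_succ_mul_factorial {x : ℝ} (hx : 0 ≤ x) :
    Summable fun k : ℕ ↦ x ^ (k + 2) / ((k + 1) * (k + 1)!) := by
  refine .of_nonneg_of_le (fun k ↦ by positivity) (fun k ↦ ?_)
    ((summable_nat_add_iff 1).2 (summable_pow_div_factorial x) |>.mul_left x)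
  calc _ ≤ x ^ (k + 2) / (k + 1)! := by
        gcongr
        exact le_mul_of_one_le_left (by positivity) (by simp)
    _ = x * (x ^ (k + 1) / (k + 1)!) := by ring

theorem exp_sub_one_sub_le_tsum {x : ℝ} (hx : 0 ≤ x) :
    exp x - 1 - x ≤ ∑' k : ℕ, x ^ (k + 2) / ((k + 1) * (k + 1)!) := by
  have hlow := hasSum_pow_div_factorial_nat_add x 2
  simp only [sum_range_succ, sum_range_zero] at hlow
  refine le_of_eq_of_le (by simp [sub_sub]) (hasSum_le (fun k ↦ ?_) hlow
    (summable_pow_div_succ_mul_factorial hx).hasSum)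
  simp only [div_eq_mul_inv]
  exact mul_le_mul_of_nonneg_left (inv_factorial_add_two_le k) (by positivity)

theorem tsum_le_one_add_three_div_mul_exp {x : ℝ} (hx : 0 < x) :
    ∑' k : ℕ, x ^ (k + 2) / ((k + 1) * (k + 1)!) ≤ (1 + 3 / x) * exp x := by
  have hup := (hasSum_pow_div_factorial_nat_add x 2).add
    ((hasSum_pow_div_factorial_nat_add x 3).mul_left (3 / x))
  have hterm (k : ℕ) : x ^ (k + 2) / ((k + 1) * (k + 1)!) ≤
      x ^ (k + 2) / (k + 2)! + 3 / x * (x ^ (k + 3) / (k + 3)!) := calc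
    _ = x ^ (k + 2) * (((k : ℝ) + 1) * (k + 1)!)⁻¹ := div_eq_mul_inv _ _
    _ ≤ x ^ (k + 2) * (((k + 2)! : ℝ)⁻¹ + 3 * ((k + 3)! : ℝ)⁻¹) :=
      mul_le_mul_of_nonneg_left (inv_succ_mul_factorial_le k) (by positivity)
    _ = _ := by field_simp; ring
  have hpartial (j : ℕ) : 0 ≤ ∑ i ∈ range j, x ^ i / i ! := sum_nonneg fun i _ ↦ by positivity
  calc _ ≤ _ := hasSum_le hterm (summable_pow_div_succ_mul_factorial hx.le).hasSum hup
    _ ≤ exp x + 3 / x * exp x := by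
      gcongr <;> linarith [hpartial 2, hpartial 3]
    _ = _ := by ring

theorem mul_poissonA_eq (m : ℝ) :
    m * poissonA m = exp (-m) * ∑' k : ℕ, m ^ (k + 2) / ((k + 1) * (k + 1)!) := by
  rw [poissonA_eq_tsum, ← tsum_mul_left, ← tsum_mul_left]
  congr with k
  ring

theorem one_sub_exp_neg_sub_mul_exp_neg_le_mul_poissonA {m : ℝ} (hm : 0 ≤ m) :
    1 - exp (-m) - m * exp (-m) ≤ m * poissonA m := calc
  _ = exp (-m) * (exp m - 1 - m) := by
    rw [mul_sub, mul_sub, ← exp_add, neg_add_cancel, exp_zero]; ring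
  _ ≤ _ := by
    rw [mul_poissonA_eq]
    exact mul_le_mul_of_nonneg_left (exp_sub_one_sub_le_tsum hm) (exp_pos _).le

theorem mul_poissonA_le {m : ℝ} (hm : 0 < m) : m * poissonA m ≤ 1 + 3 / m := calc
  _ ≤ exp (-m) * ((1 + 3 / m) * exp m) := by
    rw [mul_poissonA_eq]
    exact mul_le_mul_of_nonneg_left (tsum_le_one_add_three_div_mul_exp hm) (exp_pos _).le
  _ = _ := by rw [mul_left_comm, ← exp_add, neg_add_cancel, exp_zero, mul_one]

/-- `A(m) → 0` and `m·A(m) → 1` as `m → ∞`. -/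
theorem poissonA_tendsto :
    Tendsto poissonA atTop (nhds 0) ∧
      Tendsto (fun m => m * poissonA m) atTop (nhds 1) := by
  have hlower : Tendsto (fun m ↦ 1 - exp (-m) - m * exp (-m)) atTop (nhds 1) := by
    have hpow := tendsto_pow_mul_exp_neg_atTop_nhds_zero 1
    simp only [pow_one] at hpow
    simpa using ((tendsto_const_nhds (x := (1 : ℝ))).sub tendsto_exp_neg_atTop_nhds_zero).sub hpow
  have hupper : Tendsto (fun m : ℝ ↦ 1 + 3 / m) atTop (nhds 1) := by
    simpa using (tendsto_const_nhds (x := (1 : ℝ))).add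
      ((tendsto_const_nhds (x := (3 : ℝ))).div_atTop tendsto_id)
  have hmul : Tendsto (fun m ↦ m * poissonA m) atTop (nhds 1) :=
    tendsto_of_tendsto_of_tendsto_of_le_of_le' hlower hupper
      (eventually_ge_atTop 0 |>.mono fun _ ↦ one_sub_exp_neg_sub_mul_exp_neg_le_mul_poissonA)
      (eventually_gt_atTop 0 |>.mono fun _ ↦ mul_poissonA_le)
  refine ⟨(hmul.div_atTop tendsto_id).congr' ?_, hmul⟩
  filter_upwards [eventually_ne_atTop 0] with m hm
  exact mul_div_cancel_left₀ _ hm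
end

section
/- Let N be a Poisson random variable with mean m > 0 and define A(m) = E[(1/N)1_{N≠0}], B(m) = E[(1/N²)1_{N≠0}], C(m) = E[(1/N³)1_{N≠0}]. Then B(m) = o(A(m)) and C(m) = o(B(m)) as m → ∞; more precisely m²B(m) → 1 and m³C(m) → 1 as m → ∞. -/
/-!
For `k ≥ 1` one has `k ^ p * k ! ≤ (k + p)!` and, conversely,
`(k + p + 1)! ≤ (k + p + 1 + C) * k ^ p * k !` with a constant `C` depending only on `p`.
Hence `1 / (k + p)! ≤ 1 / (k ^ p * k !) ≤ 1 / (k + p)! + C / (k + p + 1)!`, and summing against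
`e^{-m} m^k` squeezes `m ^ p * E[N^{-p}; N ≥ 1]` between `P(N > p)` and
`P(N > p) + C * P(N > p + 1) / m`, both of which tend to `1`. Thus `E[N^{-p}; N ≥ 1] ~ m^{-p}`,
and the little-o claims follow from `m^{-p-1} = o(m^{-p})`.
-/

open Filter Asymptotics

/-- `E[N^{-p}·1_{N≠0}]` for `N ~ Poisson(m)`. -/
noncomputable def poissonInvMoment (p : ℕ) (m : ℝ) : ℝ :=
  ∑' k : ℕ, if k = 0 then 0 else (1 / (k : ℝ) ^ p) * (Real.exp (-m) * m ^ k / (Nat.factorial k))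

open Real Nat Finset Topology

namespace Nat

theorem pow_mul_factorial_le_factorial_add (k p : ℕ) : k ^ p * k ! ≤ (k + p)! :=
  calc k ^ p * k ! ≤ k ! * (k + 1) ^ p := by
        rw [mul_comm]; exact Nat.mul_le_mul_left _ (Nat.pow_le_pow_left k.le_succ p)
    _ ≤ (k + p)! := factorial_mul_pow_le_factorial

theorem exists_factorial_add_succ_le (p : ℕ) :
    ∃ C : ℕ, ∀ k, 0 < k → (k + p + 1)! ≤ (k + p + 1 + C) * (k ^ p * k !) := by
  induction p with
  | zero => exact ⟨0, fun k _ => by simp [factorial_succ]⟩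
  | succ p ih =>
    obtain ⟨C, hC⟩ := ih
    refine ⟨(p + 1 + C) * (p + 3), fun k hk => ?_⟩
    have key : (k + p + 2) * (k + p + 1 + C) ≤ (k + (p + 1) + 1 + (p + 1 + C) * (p + 3)) * k := by
      nlinarith [Nat.mul_le_mul_right ((p + 2) * (p + 1 + C)) hk]
    calc (k + (p + 1) + 1)! = (k + p + 2) * (k + p + 1)! := factorial_succ _
      _ ≤ (k + p + 2) * ((k + p + 1 + C) * (k ^ p * k !)) := Nat.mul_le_mul_left _ (hC k hk)
      _ = (k + p + 2) * (k + p + 1 + C) * (k ^ p * k !) := by ring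
      _ ≤ (k + (p + 1) + 1 + (p + 1 + C) * (p + 3)) * k * (k ^ p * k !) :=
        Nat.mul_le_mul_right _ key
      _ = (k + (p + 1) + 1 + (p + 1 + C) * (p + 3)) * (k ^ (p + 1) * k !) := by ring

end Nat

noncomputable def poissonWeight (m : ℝ) (n : ℕ) : ℝ := exp (-m) * m ^ n / n !

lemma hasSum_poissonWeight (m : ℝ) : HasSum (poissonWeight m) 1 := by
  have h := (NormedSpace.expSeries_div_hasSum_exp m).mul_left (exp (-m))
  rw [← exp_eq_exp_ℝ, ← exp_add, neg_add_cancel, exp_zero] at h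
  rwa [show poissonWeight m = fun n => exp (-m) * (m ^ n / n !) from
    funext fun n => mul_div_assoc _ _ _]

lemma poissonWeight_nonneg {m : ℝ} (hm : 0 ≤ m) (n : ℕ) : 0 ≤ poissonWeight m n := by
  unfold poissonWeight; positivity

lemma tendsto_poissonWeight_atTop (n : ℕ) :
    Tendsto (fun m => poissonWeight m n) atTop (𝓝 0) := by
  simpa [poissonWeight, mul_comm] using
    (tendsto_pow_mul_exp_neg_atTop_nhds_zero n).div_const (n ! : ℝ)

lemma poissonWeight_add_div_pow {m : ℝ} (hm : m ≠ 0) (k j : ℕ) :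
    poissonWeight m (k + j) / m ^ j = exp (-m) * m ^ k / (k + j)! := by
  rw [poissonWeight, pow_add]
  field_simp

/-- `P(N > j)` for `N ~ Poisson(m)`. -/
noncomputable def poissonTail (j : ℕ) (m : ℝ) : ℝ := ∑' n, poissonWeight m (n + 1 + j)

lemma summable_poissonWeight_add (m : ℝ) (j : ℕ) : Summable fun n => poissonWeight m (n + j) :=
  (summable_nat_add_iff j).2 (hasSum_poissonWeight m).summable

lemma poissonTail_eq (j : ℕ) (m : ℝ) :
    poissonTail j m = 1 - ∑ i ∈ range (j + 1), poissonWeight m i := by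
  have h := (hasSum_poissonWeight m).summable.sum_add_tsum_nat_add (j + 1)
  rw [(hasSum_poissonWeight m).tsum_eq] at h
  rw [poissonTail, eq_sub_iff_add_eq', ← h]
  congr 1
  exact tsum_congr fun n => by rw [add_assoc, add_comm 1]

lemma poissonTail_le_one {m : ℝ} (hm : 0 ≤ m) (j : ℕ) : poissonTail j m ≤ 1 := by
  rw [poissonTail_eq]
  linarith [sum_nonneg fun i (_ : i ∈ range (j + 1)) => poissonWeight_nonneg hm i]

lemma tendsto_poissonTail_atTop (j : ℕ) : Tendsto (poissonTail j) atTop (𝓝 1) := by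
  have h := tendsto_const_nhds (x := (1 : ℝ)).sub
    (tendsto_finsetSum (range (j + 1)) fun i _ => tendsto_poissonWeight_atTop i)
  simpa [funext (poissonTail_eq j)] using h

lemma summable_poissonWeight_succ_div_pow {m : ℝ} (hm : 0 ≤ m) (p : ℕ) :
    Summable fun n : ℕ => poissonWeight m (n + 1) / ((n + 1 : ℕ) : ℝ) ^ p :=
  (summable_poissonWeight_add m 1).of_nonneg_of_le
    (fun n => div_nonneg (poissonWeight_nonneg hm _) (by positivity))
    (fun n => div_le_self (poissonWeight_nonneg hm _) (one_le_pow₀ (by simp)))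

lemma poissonInvMoment_eq_tsum {m : ℝ} (hm : 0 ≤ m) (p : ℕ) :
    poissonInvMoment p m = ∑' n : ℕ, poissonWeight m (n + 1) / ((n + 1 : ℕ) : ℝ) ^ p := by
  rw [poissonInvMoment, tsum_eq_zero_add', if_pos rfl, zero_add]
  · exact tsum_congr fun n => by
      rw [if_neg n.succ_ne_zero, poissonWeight, one_div_mul_eq_div]
  · refine (summable_poissonWeight_succ_div_pow hm p).congr fun n => ?_
    rw [if_neg n.succ_ne_zero, poissonWeight, one_div_mul_eq_div]

lemma poissonWeight_add_div_pow_le {m : ℝ} (hm : 0 < m) {k : ℕ} (hk : 0 < k) (p : ℕ) :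
    poissonWeight m (k + p) / m ^ p ≤ poissonWeight m k / (k : ℝ) ^ p := by
  rw [poissonWeight_add_div_pow hm.ne', poissonWeight, div_div, mul_comm (k ! : ℝ)]
  gcongr
  exact_mod_cast k.pow_mul_factorial_le_factorial_add p

lemma poissonWeight_div_pow_le {m : ℝ} (hm : 0 < m) {k p C : ℕ} (hk : 0 < k)
    (hC : (k + p + 1)! ≤ (k + p + 1 + C) * (k ^ p * k !)) :
    poissonWeight m k / (k : ℝ) ^ p ≤
      poissonWeight m (k + p) / m ^ p + C * (poissonWeight m (k + p + 1) / m ^ (p + 1)) := by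
  rw [add_assoc, poissonWeight_add_div_pow hm.ne', poissonWeight_add_div_pow hm.ne',
    poissonWeight, div_div, mul_comm (k ! : ℝ), ← add_assoc]
  have hC' : ((k + p + 1)! : ℝ) ≤ (k + p + 1 + C) * (k ^ p * k !) := by exact_mod_cast hC
  have hfac : ((k + p + 1)! : ℝ) = (k + p + 1) * (k + p)! := by push_cast [factorial_succ]; ring
  have key : (1 : ℝ) / (k ^ p * k !) ≤ 1 / (k + p)! + C / (k + p + 1)! := by
    rw [hfac] at hC' ⊢
    rw [div_add_div _ _ (by positivity) (by positivity), div_le_div_iff₀ (by positivity) (by positivity)]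
    nlinarith
  calc exp (-m) * m ^ k / (k ^ p * k !) = exp (-m) * m ^ k * (1 / (k ^ p * k !)) := by ring
    _ ≤ exp (-m) * m ^ k * (1 / (k + p)! + C / (k + p + 1)!) := by gcongr
    _ = _ := by ring

lemma poissonTail_div_pow_le_poissonInvMoment {m : ℝ} (hm : 0 < m) (p : ℕ) :
    poissonTail p m / m ^ p ≤ poissonInvMoment p m := by
  rw [poissonInvMoment_eq_tsum hm.le, poissonTail, ← tsum_div_const]
  exact ((summable_nat_add_iff 1).2 (summable_poissonWeight_add m p)).div_const _ |>.tsum_le_tsum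
    (fun n => poissonWeight_add_div_pow_le hm n.succ_pos p)
    (summable_poissonWeight_succ_div_pow hm.le p)

lemma poissonInvMoment_le {m : ℝ} (hm : 0 < m) {p C : ℕ}
    (hC : ∀ k, 0 < k → (k + p + 1)! ≤ (k + p + 1 + C) * (k ^ p * k !)) :
    poissonInvMoment p m ≤
      poissonTail p m / m ^ p + C * (poissonTail (p + 1) m / m ^ (p + 1)) := by
  have hs (j : ℕ) : Summable fun n => poissonWeight m (n + 1 + j) / m ^ j :=
    ((summable_nat_add_iff 1).2 (summable_poissonWeight_add m j)).div_const _
  rw [poissonInvMoment_eq_tsum hm.le, poissonTail, poissonTail, ← tsum_div_const, ← tsum_div_const,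
    ← tsum_mul_left, ← (hs p).tsum_add ((hs (p + 1)).mul_left _)]
  exact (summable_poissonWeight_succ_div_pow hm.le p).tsum_le_tsum
    (fun n => poissonWeight_div_pow_le hm n.succ_pos (hC _ n.succ_pos))
    ((hs p).add ((hs (p + 1)).mul_left _))

theorem tendsto_pow_mul_poissonInvMoment (p : ℕ) :
    Tendsto (fun m => m ^ p * poissonInvMoment p m) atTop (𝓝 1) := by
  obtain ⟨C, hC⟩ := Nat.exists_factorial_add_succ_le p
  have upper : Tendsto (fun m : ℝ => 1 + C * m⁻¹) atTop (𝓝 1) := by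
    simpa using (tendsto_inv_atTop_zero.const_mul (C : ℝ)).const_add 1
  refine tendsto_of_tendsto_of_tendsto_of_le_of_le' (tendsto_poissonTail_atTop p) upper ?_ ?_
  · filter_upwards [eventually_gt_atTop 0] with m hm
    rw [← div_le_iff₀' (by positivity)]
    exact poissonTail_div_pow_le_poissonInvMoment hm p
  · filter_upwards [eventually_gt_atTop 0] with m hm
    calc m ^ p * poissonInvMoment p m
        ≤ m ^ p * (poissonTail p m / m ^ p + C * (poissonTail (p + 1) m / m ^ (p + 1))) := by
          gcongr; exact poissonInvMoment_le hm hC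
      _ = poissonTail p m + C * poissonTail (p + 1) m * m⁻¹ := by field_simp; ring
      _ ≤ 1 + C * 1 * m⁻¹ := by
          gcongr
          exacts [poissonTail_le_one hm.le p, poissonTail_le_one hm.le (p + 1)]
      _ = 1 + C * m⁻¹ := by rw [mul_one]

theorem isEquivalent_poissonInvMoment (p : ℕ) :
    poissonInvMoment p ~[atTop] fun m => (m ^ p)⁻¹ :=
  isEquivalent_of_tendsto_one <| (tendsto_pow_mul_poissonInvMoment p).congr fun m => by
    simp only [Pi.div_apply, div_inv_eq_mul, mul_comm]

theorem isLittleO_poissonInvMoment_succ (p : ℕ) :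
    poissonInvMoment (p + 1) =o[atTop] poissonInvMoment p := by
  have h : (fun m : ℝ => (m ^ (p + 1))⁻¹) =o[atTop] fun m => (m ^ p)⁻¹ := by
    have := ((isLittleO_one_iff ℝ).2 tendsto_inv_atTop_zero).mul_isBigO
      (isBigO_refl (fun m : ℝ => (m ^ p)⁻¹) atTop)
    simpa [pow_succ, mul_comm] using this
  exact (isEquivalent_poissonInvMoment (p + 1)).isBigO.trans_isLittleO
    (h.trans_isBigO (isEquivalent_poissonInvMoment p).isBigO_symm)

/-- with `A(m) = E[N⁻¹1_{N≠0}]`, `B(m) = E[N⁻²1_{N≠0}]`,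
`C(m) = E[N⁻³1_{N≠0}]` for `N ~ Poisson(m)`, one has `B = o(A)` and `C = o(B)`
as `m → ∞`; more precisely `m²B(m) → 1` and `m³C(m) → 1`. -/
theorem poisson_inverse_moments :
    (fun m => poissonInvMoment 2 m) =o[atTop] (fun m => poissonInvMoment 1 m) ∧
    (fun m => poissonInvMoment 3 m) =o[atTop] (fun m => poissonInvMoment 2 m) ∧
    Tendsto (fun m => m ^ 2 * poissonInvMoment 2 m) atTop (nhds 1) ∧
    Tendsto (fun m => m ^ 3 * poissonInvMoment 3 m) atTop (nhds 1) :=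
  ⟨isLittleO_poissonInvMoment_succ 1, isLittleO_poissonInvMoment_succ 2,
    tendsto_pow_mul_poissonInvMoment 2, tendsto_pow_mul_poissonInvMoment 3⟩
end
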